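/- arXiv:2103.15444 — 9 statements merged into one kernel-verified Lean document; each statement's English description precedes it below -/
import Mathlib

section
/- Every nonzero element of the Lipman cone of an intersection matrix is strictly positive in every coordinate: if $d \in \mathbb{Z}^n$ satisfies $d_i \ge 0$ for all $i$, $(Md)_i \le 0$ for all $i$, and $d \ne 0$, then $d_i > 0$ for every index $i$. -/
open Matrix
/-- Every nonzero element of the Lipman cone of an intersection matrix is strictly
positive in every coordinate. -/
theorem lipman_cone_strictly_positive
    (n : ℕ) (hn : 1 ≤ n) (M : Matrix (Fin n) (Fin n) ℤ)
    (hsym : ∀ i j, M i j = M j i)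
    (hneg : ∀ x : Fin n → ℝ, x ≠ 0 →
      x ⬝ᵥ (M.map (Int.cast : ℤ → ℝ)).mulVec x < 0)
    (hoff : ∀ i j, i ≠ j → 0 ≤ M i j)
    (hconn : ∀ i j : Fin n, i ≠ j → ∃ m : ℕ, ∃ k : ℕ → Fin n,
      k 0 = i ∧ k m = j ∧ ∀ t < m, 0 < M (k t) (k (t + 1)))
    (d : Fin n → ℤ)
    (hd0 : ∀ i, 0 ≤ d i)
    (hMd : ∀ i, M.mulVec d i ≤ 0)
    (hdne : d ≠ 0) :
    ∀ i, 0 < d i := by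
  by_contra h
  push_neg at h
  obtain ⟨i, hi⟩ := h
  have hdi : d i = 0 := le_antisymm hi (hd0 i)
  obtain ⟨j, hj⟩ : ∃ j, d j ≠ 0 := by
    by_contra hc; push_neg at hc; exact hdne (funext hc)
  have hij : i ≠ j := fun h => hj (h ▸ hdi)
  obtain ⟨m, k, hk0, hkm, hkpos⟩ := hconn i j hij
  have key : ∀ a, d a = 0 → ∀ b, 0 < M a b → d b = 0 := by
    intro a ha b hb
    have hsum : M.mulVec d a = ∑ c, M a c * d c := rfl
    have hnn : ∀ c ∈ Finset.univ, (0 : ℤ) ≤ M a c * d c := by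
      intro c _
      rcases eq_or_ne c a with rfl | hca
      · simp [ha]
      · exact mul_nonneg (hoff a c (Ne.symm hca)) (hd0 c)
    have hz := (Finset.sum_eq_zero_iff_of_nonneg hnn).mp
      (le_antisymm (hsum ▸ hMd a) (Finset.sum_nonneg hnn)) b (Finset.mem_univ b)
    rcases mul_eq_zero.mp hz with h1 | h2
    · exact absurd h1 (ne_of_gt hb)
    · exact h2
  have hall : ∀ t, t ≤ m → d (k t) = 0 := by
    intro t
    induction t with
    | zero => intro _; rw [hk0]; exact hdi
    | succ t ih =>
      intro ht
      exact key (k t) (ih (Nat.le_of_succ_le ht)) (k (t + 1)) (hkpos t ht)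
  exact hj (hkm ▸ hall m le_rfl)
end

section
/- The Lipman cone of an intersection matrix is closed under componentwise minimum: if $d, d' \in \mathcal{E}^{+}$, then the vector $z$ defined by $z_i = \min(d_i, d'_i)$ for all $i$ also belongs to $\mathcal{E}^{+}$. -/
open Matrix

/-- The Lipman cone of an intersection matrix is closed under componentwise minimum. -/
theorem lipman_cone_closed_under_min
    (n : ℕ) (hn : 1 ≤ n) (M : Matrix (Fin n) (Fin n) ℤ)
    (hsym : ∀ i j, M i j = M j i)
    (hneg : ∀ x : Fin n → ℝ, x ≠ 0 →
      x ⬝ᵥ (M.map (Int.cast : ℤ → ℝ)).mulVec x < 0)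
    (hoff : ∀ i j, i ≠ j → 0 ≤ M i j)
    (hconn : ∀ i j : Fin n, i ≠ j → ∃ m : ℕ, ∃ k : ℕ → Fin n,
      k 0 = i ∧ k m = j ∧ ∀ t < m, 0 < M (k t) (k (t + 1)))
    (d d' : Fin n → ℤ)
    (hd0 : ∀ i, 0 ≤ d i) (hMd : ∀ i, M.mulVec d i ≤ 0)
    (hd0' : ∀ i, 0 ≤ d' i) (hMd' : ∀ i, M.mulVec d' i ≤ 0) :
    (∀ i, 0 ≤ min (d i) (d' i)) ∧
      (∀ i, M.mulVec (fun j => min (d j) (d' j)) i ≤ 0) := by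
  refine ⟨fun i => le_min (hd0 i) (hd0' i), fun i => ?_⟩
  rcases le_total (d i) (d' i) with h | h
  · calc M.mulVec (fun j => min (d j) (d' j)) i ≤ M.mulVec d i := by
          unfold Matrix.mulVec dotProduct
          refine Finset.sum_le_sum fun j _ => ?_
          rcases eq_or_ne j i with rfl | hj
          · simp [min_eq_left h]
          · exact mul_le_mul_of_nonneg_left (min_le_left _ _) (hoff i j hj.symm)
        _ ≤ 0 := hMd i
  · calc M.mulVec (fun j => min (d j) (d' j)) i ≤ M.mulVec d' i := by
          unfold Matrix.mulVec dotProduct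
          refine Finset.sum_le_sum fun j _ => ?_
          rcases eq_or_ne j i with rfl | hj
          · simp [min_eq_right h]
          · exact mul_le_mul_of_nonneg_left (min_le_right _ _) (hoff i j hj.symm)
        _ ≤ 0 := hMd' i
end

section
/- Existence and uniqueness of the fundamental cycle: for any intersection matrix $M$, there exists a unique nonzero $Z \in \mathcal{E}^{+}$ such that $Z \le d$ componentwise for every nonzero $d \in \mathcal{E}^{+}$; moreover every coordinate of $Z$ is strictly positive. -/
open Matrix

section FundCycleAux

variable {n : ℕ}

private lemma fc_mulVec_mono (M : Matrix (Fin n) (Fin n) ℤ)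
    (hoff : ∀ i j, i ≠ j → 0 ≤ M i j) (u v : Fin n → ℤ) (i : Fin n)
    (hi : u i = v i) (h : ∀ j, u j ≤ v j) :
    M.mulVec u i ≤ M.mulVec v i := by
  simp only [Matrix.mulVec, dotProduct]
  refine Finset.sum_le_sum fun j _ => ?_
  rcases eq_or_ne j i with rfl | hji
  · rw [hi]
  · exact mul_le_mul_of_nonneg_left (h j) (hoff i j (Ne.symm hji))

private lemma fc_pos (M : Matrix (Fin n) (Fin n) ℤ)
    (hoff : ∀ i j, i ≠ j → 0 ≤ M i j)
    (hconn : ∀ i j : Fin n, i ≠ j → ∃ m : ℕ, ∃ k : ℕ → Fin n,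
      k 0 = i ∧ k m = j ∧ ∀ t < m, 0 < M (k t) (k (t + 1)))
    (d : Fin n → ℤ) (hd0 : d ≠ 0) (hdn : ∀ i, 0 ≤ d i)
    (hdc : ∀ i, M.mulVec d i ≤ 0) :
    ∀ i, 0 < d i := by
  have key : ∀ i, d i = 0 → ∀ j, j ≠ i → 0 < M i j → d j = 0 := by
    intro i hi j hji hMij
    have hsum0 : M.mulVec d i = ∑ l ∈ Finset.univ.erase i, M i l * d l := by
      simp only [Matrix.mulVec, dotProduct]
      rw [← Finset.add_sum_erase _ _ (Finset.mem_univ i), hi, mul_zero, zero_add]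
    have hnn : ∀ l ∈ Finset.univ.erase i, 0 ≤ M i l * d l := by
      intro l hl
      exact mul_nonneg (hoff i l (Finset.ne_of_mem_erase hl).symm) (hdn l)
    have hle := hdc i
    rw [hsum0] at hle
    have hz := (Finset.sum_eq_zero_iff_of_nonneg hnn).mp
      (le_antisymm hle (Finset.sum_nonneg hnn))
    have hj0 := hz j (Finset.mem_erase.mpr ⟨hji, Finset.mem_univ j⟩)
    rcases mul_eq_zero.mp hj0 with h | h
    · exact absurd h (ne_of_gt hMij)
    · exact h
  intro i
  rcases (hdn i).lt_or_eq with h | h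
  · exact h
  exfalso
  obtain ⟨j, hj⟩ := Function.ne_iff.mp hd0
  have hij : i ≠ j := by rintro rfl; exact hj h.symm
  obtain ⟨m, k, hk0, hkm, hstep⟩ := hconn i j hij
  have hall : ∀ t, t ≤ m → d (k t) = 0 := by
    intro t
    induction t with
    | zero => intro _; rw [hk0]; exact h.symm
    | succ t ih =>
      intro ht
      have h1 := ih (Nat.le_of_succ_le ht)
      rcases eq_or_ne (k (t + 1)) (k t) with he | he
      · rw [he]; exact h1
      · exact key (k t) h1 (k (t + 1)) he (hstep t ht)
  exact hj (by rw [← hkm]; exact hall m le_rfl)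

private lemma fc_exists (hn : 1 ≤ n) (M : Matrix (Fin n) (Fin n) ℤ)
    (hsym : ∀ i j, M i j = M j i)
    (hneg : ∀ x : Fin n → ℝ, x ≠ 0 →
      x ⬝ᵥ (M.map (Int.cast : ℤ → ℝ)).mulVec x < 0)
    (hoff : ∀ i j, i ≠ j → 0 ≤ M i j) :
    ∃ d : Fin n → ℤ, d ≠ 0 ∧ (∀ i, 0 ≤ d i) ∧ (∀ i, M.mulVec d i ≤ 0) := by
  set MR := M.map (Int.cast : ℤ → ℝ) with hMR
  have hcast : ∀ y : Fin n → ℤ, ((y ⬝ᵥ M.mulVec y : ℤ) : ℝ)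
      = (fun i => (y i : ℝ)) ⬝ᵥ MR.mulVec (fun i => (y i : ℝ)) := by
    intro y
    simp only [dotProduct, Matrix.mulVec, Matrix.map_apply, hMR]
    push_cast
    ring
  have hPD : (-MR).PosDef := by
    rw [Matrix.posDef_iff_dotProduct_mulVec]
    constructor
    · ext i j
      simp only [Matrix.conjTranspose_apply, Matrix.neg_apply, Matrix.map_apply, hMR,
        star_trivial, hsym i j]
    · intro x hx
      have h := hneg x hx
      have hsx : star x = x := funext fun i => star_trivial _
      rw [Matrix.neg_mulVec, dotProduct_neg, hsx]
      linarith
  have hdet : 0 < ((-1) ^ n * M.det : ℤ) := by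
    have h1 : 0 < (-MR).det := hPD.det_pos
    rw [Matrix.det_neg] at h1
    have h2 : ((M.det : ℤ) : ℝ) = MR.det := by
      have h2' := RingHom.map_det (Int.castRingHom ℝ) M
      simpa [RingHom.mapMatrix_apply, hMR] using h2'
    rw [← h2, Fintype.card_fin] at h1
    have h3 : (0 : ℝ) < (((-1) ^ n * M.det : ℤ) : ℝ) := by rw [Int.cast_mul, Int.cast_pow, Int.cast_neg, Int.cast_one]; linarith
    exact_mod_cast h3
  set c : ℤ := (-1) ^ n * M.det with hc
  set d : Fin n → ℤ := (-(-1 : ℤ) ^ n) • (M.adjugate.mulVec (fun _ => 1)) with hd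
  have hMd : ∀ i, M.mulVec d i = -c := by
    intro i
    rw [hd, Matrix.mulVec_smul, Matrix.mulVec_mulVec, Matrix.mul_adjugate,
      Matrix.smul_mulVec, Matrix.one_mulVec]
    simp only [Pi.smul_apply, smul_eq_mul, hc]
    ring
  have hdnn : ∀ i, 0 ≤ d i := by
    by_contra hcon
    push_neg at hcon
    obtain ⟨i0, hi0⟩ := hcon
    set y : Fin n → ℤ := fun i => min (d i) 0 with hy
    have hy0 : y ≠ 0 := by
      intro h
      have h0 := congrFun h i0
      simp only [hy, Pi.zero_apply] at h0
      rw [min_eq_left hi0.le] at h0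
      exact absurd h0 (ne_of_lt hi0)
    have hq : 0 ≤ y ⬝ᵥ M.mulVec y := by
      rw [dotProduct]
      apply Finset.sum_nonneg
      intro i _
      rcases lt_or_eq_of_le (min_le_right (d i) 0 : y i ≤ 0) with hlt | heq
      · have hdi : d i < 0 := by
          by_contra h
          push_neg at h
          rw [min_eq_right h] at hlt
          exact absurd hlt (lt_irrefl 0)
        have hyi : y i = d i := min_eq_left hdi.le
        have h1 : M.mulVec y i ≤ M.mulVec d i :=
          fc_mulVec_mono M hoff y d i hyi (fun j => min_le_left _ _)
        have h2 : M.mulVec y i ≤ 0 := h1.trans (by rw [hMd i]; linarith)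
        nlinarith [hlt.le, h2]
      · have hyi0 : y i = 0 := heq
        rw [hyi0, zero_mul]
    have hyR : (fun i => (y i : ℝ)) ≠ 0 := by
      intro h
      apply hy0
      funext i
      have h0 := congrFun h i
      simp only [Pi.zero_apply] at h0
      exact_mod_cast h0
    have hR := hneg _ hyR
    rw [← hcast y] at hR
    exact absurd hR (not_lt.mpr (by exact_mod_cast hq))
  have hd0 : d ≠ 0 := by
    intro h
    have h1 := hMd ⟨0, hn⟩
    rw [h, Matrix.mulVec_zero] at h1
    simp only [Pi.zero_apply] at h1
    linarith
  exact ⟨d, hd0, hdnn, fun i => by rw [hMd i]; linarith⟩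

end FundCycleAux

/-- Existence and uniqueness of the fundamental cycle: there is a unique nonzero
element of the Lipman cone which is componentwise smaller than every nonzero element
of the Lipman cone; moreover all its coordinates are strictly positive. -/
theorem fundamental_cycle_exists_unique
    (n : ℕ) (hn : 1 ≤ n) (M : Matrix (Fin n) (Fin n) ℤ)
    (hsym : ∀ i j, M i j = M j i)
    (hneg : ∀ x : Fin n → ℝ, x ≠ 0 →
      x ⬝ᵥ (M.map (Int.cast : ℤ → ℝ)).mulVec x < 0)
    (hoff : ∀ i j, i ≠ j → 0 ≤ M i j)
    (hconn : ∀ i j : Fin n, i ≠ j → ∃ m : ℕ, ∃ k : ℕ → Fin n,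
      k 0 = i ∧ k m = j ∧ ∀ t < m, 0 < M (k t) (k (t + 1))) :
    ∃ Z : Fin n → ℤ,
      (Z ≠ 0 ∧ (∀ i, 0 ≤ Z i) ∧ (∀ i, M.mulVec Z i ≤ 0)) ∧
      (∀ d : Fin n → ℤ, d ≠ 0 → (∀ i, 0 ≤ d i) → (∀ i, M.mulVec d i ≤ 0) →
        ∀ i, Z i ≤ d i) ∧
      (∀ i, 0 < Z i) ∧
      (∀ Z' : Fin n → ℤ,
        (Z' ≠ 0 ∧ (∀ i, 0 ≤ Z' i) ∧ (∀ i, M.mulVec Z' i ≤ 0)) →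
        (∀ d : Fin n → ℤ, d ≠ 0 → (∀ i, 0 ≤ d i) → (∀ i, M.mulVec d i ≤ 0) →
          ∀ i, Z' i ≤ d i) →
        Z' = Z) := by
  obtain ⟨d0, hd00, hd0n, hd0c⟩ := fc_exists hn M hsym hneg hoff
  -- closure of the cone under pointwise min
  have hmincl : ∀ d e : Fin n → ℤ, d ≠ 0 → (∀ i, 0 ≤ d i) → (∀ i, M.mulVec d i ≤ 0) →
      e ≠ 0 → (∀ i, 0 ≤ e i) → (∀ i, M.mulVec e i ≤ 0) →
      ((fun i => min (d i) (e i)) ≠ 0 ∧ (∀ i, 0 ≤ min (d i) (e i)) ∧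
        (∀ i, M.mulVec (fun i => min (d i) (e i)) i ≤ 0)) := by
    intro d e hd0 hdn hdc he0 hen hec
    refine ⟨?_, fun i => le_min (hdn i) (hen i), ?_⟩
    · intro h
      have hdpos := fc_pos M hoff hconn d hd0 hdn hdc ⟨0, hn⟩
      have hepos := fc_pos M hoff hconn e he0 hen hec ⟨0, hn⟩
      have h0 := congrFun h ⟨0, hn⟩
      simp only [Pi.zero_apply] at h0
      rcases min_le_left (d ⟨0, hn⟩) (e ⟨0, hn⟩) |>.lt_or_eq with _ | _ <;> omega
    · intro i
      rcases le_total (d i) (e i) with h | h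
      · exact (fc_mulVec_mono M hoff _ d i (min_eq_left h)
          (fun j => min_le_left _ _)).trans (hdc i)
      · exact (fc_mulVec_mono M hoff _ e i (min_eq_right h)
          (fun j => min_le_right _ _)).trans (hec i)
  -- pick an element of minimal coordinate sum
  obtain ⟨N, hNmem, hNmin⟩ :=
    (wellFounded_lt (α := ℕ)).has_min
      {N : ℕ | ∃ d : Fin n → ℤ,
        (d ≠ 0 ∧ (∀ i, 0 ≤ d i) ∧ (∀ i, M.mulVec d i ≤ 0)) ∧ (∑ i, d i).toNat = N}
      ⟨_, d0, ⟨hd00, hd0n, hd0c⟩, rfl⟩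
  obtain ⟨Z, ⟨hZ0, hZn, hZc⟩, hZN⟩ := hNmem
  have hZmin : ∀ d : Fin n → ℤ, d ≠ 0 → (∀ i, 0 ≤ d i) → (∀ i, M.mulVec d i ≤ 0) →
      ∀ i, Z i ≤ d i := by
    intro e he0 hen hec
    obtain ⟨hf0, hfn, hfc⟩ := hmincl Z e hZ0 hZn hZc he0 hen hec
    set f : Fin n → ℤ := fun i => min (Z i) (e i) with hf
    have hfle : ∀ i, f i ≤ Z i := fun i => min_le_left _ _
    have hsum_le : ∑ i, f i ≤ ∑ i, Z i := Finset.sum_le_sum fun i _ => hfle i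
    have hfnn : (0 : ℤ) ≤ ∑ i, f i := Finset.sum_nonneg fun i _ => hfn i
    have hnotlt := hNmin _ ⟨f, ⟨hf0, hfn, hfc⟩, rfl⟩
    have hnotlt' : ¬ ((∑ i, f i).toNat < N) := hnotlt
    have hsum_eq : ∑ i, f i = ∑ i, Z i := by omega
    have hfeq : ∀ i, f i = Z i := by
      have h0 : ∑ i, (Z i - f i) = 0 := by
        rw [Finset.sum_sub_distrib, hsum_eq, sub_self]
      intro i
      have hzi := (Finset.sum_eq_zero_iff_of_nonneg
        (fun i _ => sub_nonneg.mpr (hfle i))).mp h0 i (Finset.mem_univ i)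
      linarith
    intro i
    have hmi : min (Z i) (e i) = Z i := hfeq i
    exact min_eq_left_iff.mp hmi
  refine ⟨Z, ⟨hZ0, hZn, hZc⟩, hZmin, fc_pos M hoff hconn Z hZ0 hZn hZc, ?_⟩
  rintro Z' ⟨hZ'0, hZ'n, hZ'c⟩ hZ'min
  funext i
  exact le_antisymm (hZ'min Z hZ0 hZn hZc i) (hZmin Z' hZ'0 hZ'n hZ'c i)
end

section
/- For any intersection matrix $M$ and any vector $a \in \mathbb{Z}^{n}$, there exists an integer vector $d \in \mathbb{Z}^{n}$ with $d_i \ge 1$ for all $i$ and $(Md)_i + a_i \le 0$ for all $i$. (In particular, taking $a_i$ to be the valency plus twice the genus of the $i$-th vertex, there exist effective divisors satisfying the inequality $D \cdot E_v + \operatorname{val}(v) + 2g(v) \le 0$ required in the construction of analytic functions with prescribed total transform.) -/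
open Matrix

/-- For any intersection matrix `M` and any integer vector `a` there is an integer
vector `d` with all coordinates at least `1` such that `(M d)ᵢ + aᵢ ≤ 0` for all `i`. -/
theorem exists_effective_divisor_with_inequality
    (n : ℕ) (hn : 1 ≤ n) (M : Matrix (Fin n) (Fin n) ℤ)
    (hsym : ∀ i j, M i j = M j i)
    (hneg : ∀ x : Fin n → ℝ, x ≠ 0 →
      x ⬝ᵥ (M.map (Int.cast : ℤ → ℝ)).mulVec x < 0)
    (hoff : ∀ i j, i ≠ j → 0 ≤ M i j)
    (hconn : ∀ i j : Fin n, i ≠ j → ∃ m : ℕ, ∃ k : ℕ → Fin n,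
      k 0 = i ∧ k m = j ∧ ∀ t < m, 0 < M (k t) (k (t + 1)))
    (a : Fin n → ℤ) :
    ∃ d : Fin n → ℤ, (∀ i, 1 ≤ d i) ∧ (∀ i, M.mulVec d i + a i ≤ 0) := by
  classical
  set A : Matrix (Fin n) (Fin n) ℝ := M.map (Int.cast : ℤ → ℝ) with hA
  have hAoff : ∀ i j, i ≠ j → (0:ℝ) ≤ A i j := by
    intro i j hij
    simpa [hA, Matrix.map_apply] using (Int.cast_nonneg_iff.mpr (hoff i j hij) : (0:ℝ) ≤ (M i j : ℝ))
  -- injectivity of mulVec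
  have hinj : Function.Injective A.mulVecLin := by
    rw [← LinearMap.ker_eq_bot, LinearMap.ker_eq_bot']
    intro x hx
    by_contra hx0
    have h1 := hneg x hx0
    have hx' : A.mulVec x = 0 := hx
    rw [hx'] at h1
    simp at h1
  have hsurj : Function.Surjective A.mulVecLin :=
    LinearMap.injective_iff_surjective.mp hinj
  obtain ⟨y, hy⟩ := hsurj (fun _ => (-1 : ℝ))
  have hy' : A.mulVec y = fun _ => (-1 : ℝ) := hy
  -- nonnegativity of y
  have hynn : ∀ i, 0 ≤ y i := by
    set v : Fin n → ℝ := fun i => max (-(y i)) 0 with hv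
    set u : Fin n → ℝ := fun i => max (y i) 0 with hu
    have hvnn : ∀ i, 0 ≤ v i := fun i => le_max_right _ _
    have hunn : ∀ i, 0 ≤ u i := fun i => le_max_right _ _
    have hvu0 : ∀ i, v i * u i = 0 := by
      intro i
      rcases le_total (y i) 0 with h | h
      · have : u i = 0 := max_eq_right h
        simp [this]
      · have : v i = 0 := max_eq_right (neg_nonpos.mpr h)
        simp [this]
    have hvu : v = u - y := by
      funext i
      simp only [hv, hu, Pi.sub_apply]
      rcases le_total (y i) 0 with h | h
      · rw [max_eq_left (neg_nonneg.mpr h), max_eq_right h]; ring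
      · rw [max_eq_right (neg_nonpos.mpr h), max_eq_left h]; ring
    have h1 : 0 ≤ v ⬝ᵥ A.mulVec u := by
      rw [dotProduct]
      apply Finset.sum_nonneg
      intro i _
      rw [Matrix.mulVec, dotProduct, Finset.mul_sum]
      apply Finset.sum_nonneg
      intro j _
      by_cases hij : i = j
      · subst hij
        have : v i * (A i i * u i) = A i i * (v i * u i) := by ring
        rw [this, hvu0 i, mul_zero]
      · exact mul_nonneg (hvnn i) (mul_nonneg (hAoff i j hij) (hunn j))
    have h2 : 0 ≤ v ⬝ᵥ A.mulVec v := by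
      have hmv : A.mulVec v = A.mulVec u - A.mulVec y := by
        rw [hvu, Matrix.mulVec_sub]
      have hdp : v ⬝ᵥ (fun _ => (-1:ℝ)) = -∑ i, v i := by
        simp [dotProduct]
      have e : v ⬝ᵥ A.mulVec v = v ⬝ᵥ A.mulVec u + ∑ i, v i := by
        rw [hmv, dotProduct_sub, hy', hdp]
        ring
      have h3 : 0 ≤ ∑ i, v i := Finset.sum_nonneg fun i _ => hvnn i
      linarith
    have hv0 : v = 0 := by
      by_contra hv0
      exact absurd (hneg v hv0) (not_lt.mpr h2)
    intro i
    have := congrFun hv0 i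
    simp only [hv, Pi.zero_apply] at this
    have : -(y i) ≤ 0 := by
      rw [← this]; exact le_max_left _ _
    linarith
  -- strict positivity of y
  have hypos : ∀ i, 0 < y i := by
    intro i
    rcases (hynn i).lt_or_eq with h | h
    · exact h
    · exfalso
      have hge : (0:ℝ) ≤ A.mulVec y i := by
        rw [Matrix.mulVec, dotProduct]
        apply Finset.sum_nonneg
        intro j _
        by_cases hj : i = j
        · subst hj; rw [← h, mul_zero]
        · exact mul_nonneg (hAoff i j hj) (hynn j)
      rw [hy'] at hge
      norm_num at hge
  -- choose N
  have hne : (Finset.univ : Finset (Fin n)).Nonempty := ⟨⟨0, hn⟩, Finset.mem_univ _⟩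
  set B : ℝ := Finset.univ.sup' hne (fun i => (∑ j, |A i j|) + (a i : ℝ)) with hB
  obtain ⟨N, hN⟩ := exists_nat_ge (max 1 B)
  have hN1 : (1:ℝ) ≤ N := le_trans (le_max_left _ _) hN
  have hNB : B ≤ N := le_trans (le_max_right _ _) hN
  refine ⟨fun j => ⌈(N:ℝ) * y j⌉, ?_, ?_⟩
  · intro i
    have : (0:ℝ) < (N:ℝ) * y i := mul_pos (by linarith) (hypos i)
    have h4 := Int.ceil_pos.mpr this
    show 1 ≤ ⌈(N:ℝ) * y i⌉
    omega
  · intro i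
    have hcast : ((M.mulVec (fun j => ⌈(N:ℝ) * y j⌉) i : ℤ) : ℝ)
        = ∑ j, A i j * ((⌈(N:ℝ) * y j⌉ : ℤ) : ℝ) := by
      rw [Matrix.mulVec, dotProduct]
      push_cast
      refine Finset.sum_congr rfl fun j _ => ?_
      simp [hA, Matrix.map_apply]
    have hterm : ∀ j, A i j * ((⌈(N:ℝ) * y j⌉ : ℤ) : ℝ)
        ≤ A i j * ((N:ℝ) * y j) + |A i j| := by
      intro j
      set c : ℝ := ((⌈(N:ℝ) * y j⌉ : ℤ) : ℝ) with hc
      have h1 : (N:ℝ) * y j ≤ c := Int.le_ceil _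
      have h2 : c ≤ (N:ℝ) * y j + 1 := le_of_lt (Int.ceil_lt_add_one _)
      have h3 : A i j * (c - (N:ℝ) * y j) ≤ |A i j| := by
        calc A i j * (c - (N:ℝ) * y j) ≤ |A i j| * (c - (N:ℝ) * y j) :=
              mul_le_mul_of_nonneg_right (le_abs_self _) (by linarith)
          _ ≤ |A i j| * 1 :=
              mul_le_mul_of_nonneg_left (by linarith) (abs_nonneg _)
          _ = |A i j| := mul_one _
      nlinarith [h3]
    have hsum : ∑ j, A i j * ((⌈(N:ℝ) * y j⌉ : ℤ) : ℝ)
        ≤ -(N:ℝ) + ∑ j, |A i j| := by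
      calc ∑ j, A i j * ((⌈(N:ℝ) * y j⌉ : ℤ) : ℝ)
          ≤ ∑ j, (A i j * ((N:ℝ) * y j) + |A i j|) :=
            Finset.sum_le_sum fun j _ => hterm j
        _ = (N:ℝ) * (∑ j, A i j * y j) + ∑ j, |A i j| := by
            rw [Finset.sum_add_distrib, Finset.mul_sum]
            congr 1
            refine Finset.sum_congr rfl fun j _ => ?_
            ring
        _ = -(N:ℝ) + ∑ j, |A i j| := by
            have : ∑ j, A i j * y j = A.mulVec y i := by
              rw [Matrix.mulVec, dotProduct]
            rw [this, hy']
            ring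
    have hBi : (∑ j, |A i j|) + (a i : ℝ) ≤ B := by
      rw [hB]
      exact Finset.le_sup' (fun i => (∑ j, |A i j|) + (a i : ℝ)) (Finset.mem_univ i)
    have hreal : ((M.mulVec (fun j => ⌈(N:ℝ) * y j⌉) i : ℤ) : ℝ) + (a i : ℝ) ≤ 0 := by
      rw [hcast]
      linarith
    exact_mod_cast hreal
end

section
/- An intersection matrix $M$ is invertible over the rationals, and every entry of its inverse $M^{-1}$ is strictly negative (equivalently, $-M^{-1}$ has all entries strictly positive). -/
open Matrix

/-- Mapping a matrix inverse along the field hom `ℚ → ℝ`. -/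
lemma map_inv_field {n : ℕ} (N : Matrix (Fin n) (Fin n) ℚ) :
    (N⁻¹).map (Rat.cast : ℚ → ℝ) = (N.map (Rat.cast : ℚ → ℝ))⁻¹ := by
  have hdet : (N.map (Rat.cast : ℚ → ℝ)).det = ((N.det : ℚ) : ℝ) :=
    ((Rat.castHom ℝ).map_det N).symm
  have hadj : (N.map (Rat.cast : ℚ → ℝ)).adjugate = (N.adjugate).map (Rat.cast : ℚ → ℝ) :=
    ((Rat.castHom ℝ).map_adjugate N).symm
  rw [Matrix.inv_def, Matrix.inv_def, hdet, hadj]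
  ext i j
  simp [Matrix.smul_apply, Rat.cast_inv]

/-- An intersection matrix is invertible over the rationals and all entries of its
inverse are strictly negative. -/
theorem intersection_matrix_inverse_entries_neg
    (n : ℕ) (hn : 1 ≤ n) (M : Matrix (Fin n) (Fin n) ℤ)
    (hsym : ∀ i j, M i j = M j i)
    (hneg : ∀ x : Fin n → ℝ, x ≠ 0 →
      x ⬝ᵥ (M.map (Int.cast : ℤ → ℝ)).mulVec x < 0)
    (hoff : ∀ i j, i ≠ j → 0 ≤ M i j)
    (hconn : ∀ i j : Fin n, i ≠ j → ∃ m : ℕ, ∃ k : ℕ → Fin n,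
      k 0 = i ∧ k m = j ∧ ∀ t < m, 0 < M (k t) (k (t + 1))) :
    (M.map (Int.cast : ℤ → ℚ)).det ≠ 0 ∧
      ∀ i j, (M.map (Int.cast : ℤ → ℚ))⁻¹ i j < 0 := by
  set Mr : Matrix (Fin n) (Fin n) ℝ := M.map (Int.cast : ℤ → ℝ) with hMr
  -- determinant over ℝ is nonzero
  have hdetR : Mr.det ≠ 0 := by
    intro h0
    obtain ⟨v, hv, hmv⟩ := (Matrix.exists_mulVec_eq_zero_iff).2 h0
    have := hneg v hv
    rw [hmv] at this
    simp at this
  set Nq : Matrix (Fin n) (Fin n) ℚ := M.map (Int.cast : ℤ → ℚ) with hNq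
  have hmapmap : Nq.map (Rat.cast : ℚ → ℝ) = Mr := by
    ext i j
    simp [hNq, hMr, Matrix.map_apply]
  have hdetcast : ((Nq.det : ℚ) : ℝ) = Mr.det := by
    rw [← hmapmap]
    exact (Rat.castHom ℝ).map_det Nq
  have hdetQ : Nq.det ≠ 0 := by
    intro h0
    apply hdetR
    rw [← hdetcast, h0]
    simp
  refine ⟨hdetQ, ?_⟩
  -- the real inverse
  have hunit : IsUnit Mr.det := isUnit_iff_ne_zero.2 hdetR
  have hMB : Mr * Mr⁻¹ = 1 := Matrix.mul_nonsing_inv Mr hunit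
  -- properties of A := -Mr
  have hAoff : ∀ a b : Fin n, a ≠ b → (-Mr) a b ≤ 0 := by
    intro a b hab
    have h0 : (-Mr) a b = -((M a b : ℤ) : ℝ) := by simp [hMr, Matrix.map_apply]
    rw [h0]
    exact neg_nonpos.mpr (by exact_mod_cast hoff a b hab)
  have hApd : ∀ v : Fin n → ℝ, v ≠ 0 → 0 < v ⬝ᵥ (-Mr).mulVec v := by
    intro v hv
    have := hneg v hv
    simp only [Matrix.neg_mulVec, dotProduct_neg]
    linarith
  -- key: each entry of Mr⁻¹ is negative
  have key : ∀ i j, Mr⁻¹ i j < 0 := by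
    intro i j
    set x : Fin n → ℝ := fun i => -(Mr⁻¹ i j) with hx
    have hxneg : x = -(fun k => Mr⁻¹ k j) := by ext a; simp [hx]
    have hAx : ∀ i, (-Mr).mulVec x i = if i = j then 1 else 0 := by
      intro i
      rw [hxneg, Matrix.mulVec_neg, Matrix.neg_mulVec, neg_neg]
      have : Mr.mulVec (fun k => Mr⁻¹ k j) i = (Mr * Mr⁻¹) i j := by
        simp [Matrix.mulVec, Matrix.mul_apply, dotProduct]
      rw [this, hMB]
      simp [Matrix.one_apply]
    have hAxS : ∀ i, ∑ b, (-Mr) i b * x b = if i = j then 1 else 0 := by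
      intro i
      rw [← hAx i]
      simp [Matrix.mulVec, dotProduct]
    -- Step 1: x ≥ 0
    have hxnn : ∀ a, 0 ≤ x a := by
      by_contra hcon
      push_neg at hcon
      set v : Fin n → ℝ := fun a => max (-(x a)) 0 with hv
      have hvnn : ∀ a, 0 ≤ v a := fun a => le_max_right _ _
      have hvne : v ≠ 0 := by
        obtain ⟨a, ha⟩ := hcon
        intro h0
        have hva : v a = 0 := congrFun h0 a
        rw [hv] at hva
        simp only [max_eq_right_iff] at hva
        linarith
      have hu : ∀ a, x a + v a = max (x a) 0 := by
        intro a
        rcases le_total (x a) 0 with h | h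
        · have hva : v a = -(x a) := by
            rw [hv]; exact max_eq_left (by linarith)
          rw [hva, max_eq_right h]; ring
        · have hva : v a = 0 := by
            rw [hv]; exact max_eq_right (by linarith)
          rw [hva, max_eq_left h]; ring
      have huxnn : ∀ a, 0 ≤ x a + v a := by
        intro a; rw [hu a]; exact le_max_right _ _
      -- v ⬝ A x ≥ 0
      have h1 : 0 ≤ v ⬝ᵥ (-Mr).mulVec x := by
        have e : v ⬝ᵥ (-Mr).mulVec x = ∑ a, v a * (if a = j then 1 else 0) := by
          rw [dotProduct]
          exact Finset.sum_congr rfl fun a _ => by rw [hAx a]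
        rw [e]
        apply Finset.sum_nonneg
        intro a _
        by_cases h : a = j
        · simpa [h] using hvnn a
        · simp [h]
      have hdecomp : v ⬝ᵥ (-Mr).mulVec x
          = v ⬝ᵥ (-Mr).mulVec (x + v) - v ⬝ᵥ (-Mr).mulVec v := by
        rw [Matrix.mulVec_add, dotProduct_add]
        ring
      have h2 : v ⬝ᵥ (-Mr).mulVec (x + v) ≤ 0 := by
        have e : v ⬝ᵥ (-Mr).mulVec (x + v)
            = ∑ a, ∑ b, v a * ((-Mr) a b * (x b + v b)) := by
          simp [dotProduct, Matrix.mulVec, Finset.mul_sum, Pi.add_apply]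
        rw [e]
        apply Finset.sum_nonpos
        intro a _
        apply Finset.sum_nonpos
        intro b _
        rcases eq_or_lt_of_le (hvnn a) with h | h
        · rw [← h, zero_mul]
        · have hxa : x a < 0 := by
            by_contra hh
            push_neg at hh
            have : v a = 0 := by rw [hv]; exact max_eq_right (by linarith)
            rw [this] at h; linarith
          by_cases hab : a = b
          · subst hab
            have h0 : x a + v a = 0 := by rw [hu a, max_eq_right (le_of_lt hxa)]
            rw [h0, mul_zero, mul_zero]
          · exact mul_nonpos_of_nonneg_of_nonpos (le_of_lt h)
              (mul_nonpos_of_nonpos_of_nonneg (hAoff a b hab) (huxnn b))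
      have h5 := hApd v hvne
      rw [hdecomp] at h1
      linarith
    -- Step 2: x j > 0
    have hxj : 0 < x j := by
      have h1 : ∑ b, (-Mr) j b * x b = 1 := by rw [hAxS j]; simp
      rcases eq_or_lt_of_le (hxnn j) with h | h
      · exfalso
        have hterms : ∀ b ∈ Finset.univ, (-Mr) j b * x b ≤ 0 := by
          intro b _
          by_cases hb : j = b
          · subst hb; rw [← h, mul_zero]
          · exact mul_nonpos_of_nonpos_of_nonneg (hAoff j b hb) (hxnn b)
        have := Finset.sum_nonpos hterms
        rw [h1] at this
        linarith
      · exact h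
    -- Step 3: zero propagation along edges
    have hzero : ∀ a, x a = 0 → ∀ b, 0 < M a b → x b = 0 := by
      intro a ha b hb
      have haj : a ≠ j := by
        intro h; rw [h] at ha; linarith
      have h1 : ∑ c, (-Mr) a c * x c = 0 := by rw [hAxS a]; simp [haj]
      have hterms : ∀ c ∈ Finset.univ, (-Mr) a c * x c ≤ 0 := by
        intro c _
        by_cases hc : a = c
        · subst hc; rw [ha, mul_zero]
        · exact mul_nonpos_of_nonpos_of_nonneg (hAoff a c hc) (hxnn c)
      have hall := (Finset.sum_eq_zero_iff_of_nonpos hterms).1 h1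
      have hb0 := hall b (Finset.mem_univ b)
      have hMab : (-Mr) a b < 0 := by
        have h0 : (-Mr) a b = -((M a b : ℤ) : ℝ) := by simp [hMr, Matrix.map_apply]
        rw [h0]
        exact neg_neg_iff_pos.mpr (by exact_mod_cast hb)
      by_contra hxb
      have hxbp : 0 < x b := lt_of_le_of_ne (hxnn b) (Ne.symm hxb)
      nlinarith
    -- Step 4: all entries positive via connectivity
    have hxpos : 0 < x i := by
      rcases eq_or_lt_of_le (hxnn i) with h | h
      · exfalso
        have hij : i ≠ j := by
          intro hh; rw [hh] at h; linarith
        obtain ⟨m, k, hk0, hkm, hpath⟩ := hconn i j hij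
        have hz : ∀ t ≤ m, x (k t) = 0 := by
          intro t ht
          induction t with
          | zero => rw [hk0, ← h]
          | succ s ih =>
            have hs : s ≤ m := Nat.le_of_succ_le ht
            have hsm : s < m := Nat.lt_of_succ_le ht
            exact hzero (k s) (ih hs) (k (s + 1)) (hpath s hsm)
        have := hz m le_rfl
        rw [hkm] at this
        linarith
      · exact h
    have he : Mr⁻¹ i j = -(x i) := by rw [hx]; ring
    rw [he]
    linarith
  -- transfer to ℚ
  intro i j
  have hcast : ((Nq⁻¹ i j : ℚ) : ℝ) = Mr⁻¹ i j := by
    have h := map_inv_field Nq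
    rw [hmapmap] at h
    have h2 := congrFun (congrFun h i) j
    simpa [Matrix.map_apply] using h2
  have hk := key i j
  rw [← hcast] at hk
  exact_mod_cast hk
end

section
/- Slices of the Lipman cone are finite: for any intersection matrix $M$, any index $i_0$, and any integer $c \ge 0$, the set $\{ d \in \mathcal{E}^{+} : d_{i_0} = c \}$ is finite. (This is the finiteness underlying polar exploration: the intersection of a translate of the Lipman cone with a hyperplane fixing one coordinate contains only finitely many lattice points.) -/
open Matrix

/-- Slices of the Lipman cone are finite: the set of elements of the Lipman cone with a
prescribed value at one fixed coordinate is finite. -/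
theorem lipman_cone_slice_finite
    (n : ℕ) (hn : 1 ≤ n) (M : Matrix (Fin n) (Fin n) ℤ)
    (hsym : ∀ i j, M i j = M j i)
    (hneg : ∀ x : Fin n → ℝ, x ≠ 0 →
      x ⬝ᵥ (M.map (Int.cast : ℤ → ℝ)).mulVec x < 0)
    (hoff : ∀ i j, i ≠ j → 0 ≤ M i j)
    (hconn : ∀ i j : Fin n, i ≠ j → ∃ m : ℕ, ∃ k : ℕ → Fin n,
      k 0 = i ∧ k m = j ∧ ∀ t < m, 0 < M (k t) (k (t + 1)))
    (i₀ : Fin n) (c : ℤ) (hc : 0 ≤ c) :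
    {d : Fin n → ℤ |
      (∀ i, 0 ≤ d i) ∧ (∀ i, M.mulVec d i ≤ 0) ∧ d i₀ = c}.Finite := by
  classical
  set Mr : Matrix (Fin n) (Fin n) ℝ := M.map (Int.cast : ℤ → ℝ) with hMr
  set K : Set (Fin n → ℝ) :=
    {x | (∀ i, 0 ≤ x i) ∧ ∀ i, Mr.mulVec x i ≤ 0} with hK
  -- Lemma A: elements of K vanishing at i₀ are 0
  have hA : ∀ x ∈ K, x i₀ = 0 → x = 0 := by
    intro x hx hx0
    by_contra hne
    obtain ⟨j, hj⟩ := Function.ne_iff.mp hne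
    have hxj : 0 < x j := lt_of_le_of_ne (hx.1 j) (Ne.symm hj)
    have hji : j ≠ i₀ := by rintro rfl; exact hj hx0
    obtain ⟨m, k, hk0, hkm, hkpos⟩ := hconn j i₀ hji
    have hP : ∃ s, x (k s) = 0 := ⟨m, by rw [hkm]; exact hx0⟩
    have htz : x (k (Nat.find hP)) = 0 := Nat.find_spec hP
    have htle : Nat.find hP ≤ m := Nat.find_le (by rw [hkm]; exact hx0)
    have ht0 : Nat.find hP ≠ 0 := by
      intro h
      rw [h, hk0] at htz
      exact hj htz
    obtain ⟨s, hs⟩ := Nat.exists_eq_succ_of_ne_zero ht0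
    rw [hs] at htz htle
    have hsm : s < m := htle
    have hxs : 0 < x (k s) := by
      have h1 : ¬ x (k s) = 0 := Nat.find_min hP (by rw [hs]; exact Nat.lt_succ_self s)
      exact lt_of_le_of_ne (hx.1 _) (Ne.symm h1)
    have hMpos : (0:ℝ) < Mr (k (s+1)) (k s) := by
      have h1 : 0 < M (k (s+1)) (k s) := by rw [hsym]; exact hkpos s hsm
      simpa [hMr, Matrix.map_apply] using (Int.cast_pos.mpr h1 : (0:ℝ) < _)
    have hpos : 0 < Mr.mulVec x (k (s+1)) := by
      rw [Matrix.mulVec, dotProduct]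
      apply Finset.sum_pos'
      · intro i _
        by_cases hi : i = k (s+1)
        · subst hi; rw [htz]; simp
        · exact mul_nonneg
            (by simpa [hMr, Matrix.map_apply] using
              (Int.cast_nonneg_iff.mpr (hoff _ _ (Ne.symm hi)) : (0:ℝ) ≤ _)) (hx.1 i)
      · refine ⟨k s, Finset.mem_univ _, mul_pos hMpos hxs⟩
    exact absurd (hx.2 (k (s+1))) (not_le.mpr hpos)
  -- K is closed
  have hcont : ∀ (i : Fin n), Continuous fun x : Fin n → ℝ => Mr.mulVec x i := by
    intro i
    simp only [Matrix.mulVec, dotProduct]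
    exact continuous_finset_sum _ fun j _ => continuous_const.mul (continuous_apply j)
  have hKclosed : IsClosed K := by
    have hKeq : K = (⋂ i, {x : Fin n → ℝ | 0 ≤ x i}) ∩ ⋂ i, {x | Mr.mulVec x i ≤ 0} := by
      ext x
      simp [hK, Set.mem_iInter]
    rw [hKeq]
    exact (isClosed_iInter fun i => isClosed_le continuous_const (continuous_apply i)).inter
      (isClosed_iInter fun i => isClosed_le (hcont i) continuous_const)
  -- K is a cone
  have hscale : ∀ x ∈ K, ∀ t : ℝ, 0 ≤ t → t • x ∈ K := by
    intro x hx t ht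
    constructor
    · intro i
      have : (t • x) i = t * x i := rfl
      rw [this]
      exact mul_nonneg ht (hx.1 i)
    · intro i
      rw [Matrix.mulVec_smul]
      have : (t • Mr.mulVec x) i = t * Mr.mulVec x i := rfl
      rw [this]
      exact mul_nonpos_of_nonneg_of_nonpos ht (hx.2 i)
  -- Lemma B: linear bound
  obtain ⟨ε, hεpos, hεle⟩ : ∃ ε : ℝ, 0 < ε ∧ ∀ x ∈ K, ε * ‖x‖ ≤ x i₀ := by
    set S := K ∩ Metric.sphere (0 : Fin n → ℝ) 1 with hS
    have hScpt : IsCompact S := (isCompact_sphere 0 1).inter_left hKclosed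
    by_cases hne : S.Nonempty
    · obtain ⟨x₀, hx₀S, hmin⟩ := hScpt.exists_isMinOn hne
        ((continuous_apply i₀).continuousOn)
      refine ⟨x₀ i₀, ?_, ?_⟩
      · rcases lt_or_eq_of_le (hx₀S.1.1 i₀) with h | h
        · exact h
        · exfalso
          have hz := hA x₀ hx₀S.1 h.symm
          have hn1 : ‖x₀‖ = 1 := by simpa using mem_sphere_zero_iff_norm.mp hx₀S.2
          rw [hz] at hn1
          simp at hn1
      · intro x hx
        by_cases hx0 : x = 0
        · simp [hx0]
        · have hnx : 0 < ‖x‖ := norm_pos_iff.mpr hx0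
          have hy : (‖x‖⁻¹ • x) ∈ S := by
            refine ⟨hscale x hx _ (inv_nonneg.mpr hnx.le), ?_⟩
            rw [mem_sphere_zero_iff_norm, norm_smul]
            simp [abs_of_pos (inv_pos.mpr hnx), inv_mul_cancel₀ hnx.ne']
          have hle : x₀ i₀ ≤ (‖x‖⁻¹ • x) i₀ := hmin hy
          have h2 : (‖x‖⁻¹ • x) i₀ = ‖x‖⁻¹ * x i₀ := rfl
          rw [h2] at hle
          have := mul_le_mul_of_nonneg_right hle hnx.le
          calc x₀ i₀ * ‖x‖ ≤ (‖x‖⁻¹ * x i₀) * ‖x‖ := this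
            _ = x i₀ := by field_simp
    · refine ⟨1, one_pos, ?_⟩
      intro x hx
      by_cases hx0 : x = 0
      · simp [hx0]
      · exfalso
        have hnx : 0 < ‖x‖ := norm_pos_iff.mpr hx0
        refine hne ⟨‖x‖⁻¹ • x, hscale x hx _ (inv_nonneg.mpr hnx.le), ?_⟩
        rw [mem_sphere_zero_iff_norm, norm_smul]
        simp [abs_of_pos (inv_pos.mpr hnx), inv_mul_cancel₀ hnx.ne']
  -- Finish: slice is bounded
  set B : ℤ := ⌈(c : ℝ) / ε⌉ with hB
  apply Set.Finite.subset (Set.Finite.pi (fun _ : Fin n => Set.finite_Icc (0:ℤ) B))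
  intro d hd
  obtain ⟨hd1, hd2, hd3⟩ := hd
  have hxK : (fun i => (d i : ℝ)) ∈ K := by
    constructor
    · intro i
      show (0:ℝ) ≤ (d i : ℝ)
      exact_mod_cast hd1 i
    · intro i
      have hcast : Mr.mulVec (fun j => (d j : ℝ)) i = ((M.mulVec d i : ℤ) : ℝ) := by
        simp only [Matrix.mulVec, dotProduct, hMr, Matrix.map_apply]
        push_cast
        rfl
      rw [hcast]
      exact_mod_cast hd2 i
  have hnorm : ε * ‖(fun i => (d i : ℝ))‖ ≤ (c : ℝ) := by
    have := hεle _ hxK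
    simpa [hd3] using this
  have key : ∀ i, d i ≤ B := by
    intro i
    have h1 : (d i : ℝ) ≤ ‖(fun i => (d i : ℝ))‖ := by
      calc (d i : ℝ) ≤ |(d i : ℝ)| := le_abs_self _
        _ = ‖(fun i => (d i : ℝ)) i‖ := by simp [Real.norm_eq_abs]
        _ ≤ ‖(fun i => (d i : ℝ))‖ := norm_le_pi_norm (fun i => (d i : ℝ)) i
    have h2 : ‖(fun i => (d i : ℝ))‖ ≤ (c : ℝ) / ε := by
      rw [le_div_iff₀ hεpos]
      linarith [hnorm]
    have h3 : (d i : ℝ) ≤ (B : ℝ) := by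
      calc (d i : ℝ) ≤ (c : ℝ) / ε := h1.trans h2
        _ ≤ (B : ℝ) := Int.le_ceil _
    exact_mod_cast h3
  intro i _
  exact Set.mem_Icc.mpr ⟨hd1 i, key i⟩
end

section
/- For any intersection matrix $M$ and any vector $a \in \mathbb{Z}^{n}$, there exist integer vectors $d, d' \in \mathbb{Z}^{n}$ such that: $d_i \ge 1$ and $d'_i \ge 1$ for all $i$; $(Md)_i + a_i \le 0$ and $(Md')_i + a_i \le 0$ for all $i$; and $d_i d'_j - d_j d'_i \ne 0$ whenever $i \ne j$ and $M_{ij} > 0$. (This is the existence of two effective divisors $D_1, D_2$ satisfying the required inequalities together with the open determinant condition $\alpha_v \beta_w - \beta_v \alpha_w \ne 0$ for adjacent vertices, used in the construction of the principal subsheaf of Kähler 2-forms.) -/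
open Matrix

lemma pos_of_mulVec_neg (n : ℕ) (A : Matrix (Fin n) (Fin n) ℝ)
    (hneg : ∀ x : Fin n → ℝ, x ≠ 0 → x ⬝ᵥ A.mulVec x < 0)
    (hoff : ∀ i j, i ≠ j → 0 ≤ A i j)
    (y : Fin n → ℝ) (hy : ∀ i, A.mulVec y i < 0) : ∀ i, 0 < y i := by
  set z : Fin n → ℝ := fun i => max (-(y i)) 0 with hz
  have hznn : ∀ i, 0 ≤ z i := fun i => le_max_right _ _
  have hz_eq : ∀ j, z j = max (y j) 0 - y j := by
    intro j
    simp only [hz]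
    rcases le_total (y j) 0 with h | h
    · rw [max_eq_left (neg_nonneg.mpr h), max_eq_right h]; ring
    · rw [max_eq_right (neg_nonpos.mpr h), max_eq_left h]; ring
  have hge : ∀ i, 0 ≤ y i := by
    by_contra hcon
    push_neg at hcon
    obtain ⟨i0, hi0⟩ := hcon
    have hzne : z ≠ 0 := by
      intro h
      have h0 : z i0 = 0 := congrFun h i0
      have h1 : -(y i0) ≤ z i0 := le_max_left _ _
      linarith [h0 ▸ h1]
    have hS : z ⬝ᵥ A.mulVec z < 0 := hneg z hzne
    have hexp : z ⬝ᵥ A.mulVec z =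
        (∑ i, ∑ j, z i * (A i j * max (y j) 0)) - ∑ i, z i * A.mulVec y i := by
      simp only [dotProduct, Matrix.mulVec, Finset.mul_sum, ← Finset.sum_sub_distrib]
      refine Finset.sum_congr rfl fun i _ => ?_
      refine Finset.sum_congr rfl fun j _ => ?_
      rw [hz_eq j]
      ring
    have hT1 : 0 ≤ ∑ i, ∑ j, z i * (A i j * max (y j) 0) := by
      refine Finset.sum_nonneg fun i _ => Finset.sum_nonneg fun j _ => ?_
      rcases eq_or_ne i j with rfl | hij
      · have h0 : z i * max (y i) 0 = 0 := by
          rcases le_total (y i) 0 with h | h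
          · rw [max_eq_right h, mul_zero]
          · have : z i = 0 := max_eq_right (neg_nonpos.mpr h)
            rw [this, zero_mul]
        have : z i * (A i i * max (y i) 0) = A i i * (z i * max (y i) 0) := by ring
        rw [this, h0, mul_zero]
      · exact mul_nonneg (hznn i) (mul_nonneg (hoff i j hij) (le_max_right _ _))
    have hT2 : ∑ i, z i * A.mulVec y i ≤ 0 :=
      Finset.sum_nonpos fun i _ => mul_nonpos_of_nonneg_of_nonpos (hznn i) (hy i).le
    linarith [hexp ▸ hS]
  intro i
  by_contra h
  push_neg at h
  have hyi : y i = 0 := le_antisymm h (hge i)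
  have : 0 ≤ A.mulVec y i := by
    rw [Matrix.mulVec, dotProduct]
    refine Finset.sum_nonneg fun j _ => ?_
    rcases eq_or_ne j i with rfl | hij
    · simp [hyi]
    · exact mul_nonneg (hoff i j (Ne.symm hij)) (hge j)
  linarith [hy i]

lemma exists_base_vec (n : ℕ) (M : Matrix (Fin n) (Fin n) ℤ)
    (hneg : ∀ x : Fin n → ℝ, x ≠ 0 →
      x ⬝ᵥ (M.map (Int.cast : ℤ → ℝ)).mulVec x < 0)
    (hoff : ∀ i j, i ≠ j → 0 ≤ M i j) :
    ∃ c : Fin n → ℤ, (∀ i, 1 ≤ c i) ∧ (∀ i, M.mulVec c i ≤ -1) := by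
  set A := M.map (Int.cast : ℤ → ℝ) with hA
  have hoffA : ∀ i j, i ≠ j → 0 ≤ A i j := by
    intro i j hij
    simp only [hA, Matrix.map_apply]
    exact_mod_cast hoff i j hij
  have hdetA : A.det ≠ 0 := by
    intro h
    obtain ⟨v, hv0, hv⟩ := Matrix.exists_mulVec_eq_zero_iff.2 h
    have := hneg v hv0
    rw [hv] at this
    simp at this
  have hAdet : A.det = (M.det : ℝ) := by
    have := RingHom.map_det (Int.castRingHom ℝ) M
    simp only [RingHom.mapMatrix_apply] at this
    rw [hA]
    rw [show (Int.cast : ℤ → ℝ) = ⇑(Int.castRingHom ℝ) from rfl, ← this]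
  have hdet : M.det ≠ 0 := by
    intro h
    apply hdetA
    rw [hAdet, h, Int.cast_zero]
  -- candidate
  set ε : ℤ := if 0 < M.det then -1 else 1 with hε
  set c : Fin n → ℤ := ε • (Matrix.cramer M (fun _ => 1)) with hc
  have hMc : ∀ i, M.mulVec c i = -|M.det| := by
    intro i
    have h1 : M.mulVec c = ε • (M.det • (fun _ => (1:ℤ))) := by
      rw [hc, Matrix.mulVec_smul, Matrix.mulVec_cramer]
    have : M.mulVec c i = ε * M.det := by
      rw [h1]; simp
    rw [this]
    rcases lt_trichotomy M.det 0 with h | h | h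
    · simp [hε, not_lt.mpr h.le, abs_of_neg h]
    · exact absurd h hdet
    · simp [hε, h, abs_of_pos h]
  have habs : 1 ≤ |M.det| := Int.one_le_abs (by exact hdet)
  -- cast to ℝ and apply positivity
  have hcast : ∀ (v : Fin n → ℤ) (i : Fin n),
      ((M.mulVec v i : ℤ) : ℝ) = A.mulVec (fun k => (v k : ℝ)) i := by
    intro v i
    simp [Matrix.mulVec, dotProduct, hA, Matrix.map_apply]
  have hcr : ∀ i, A.mulVec (fun k => ((c k : ℤ) : ℝ)) i < 0 := by
    intro i
    rw [← hcast c i, hMc i]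
    have h0 : (-|M.det| : ℤ) < 0 := by omega
    exact_mod_cast h0
  have hpos := pos_of_mulVec_neg n A hneg hoffA _ hcr
  refine ⟨c, fun i => ?_, fun i => ?_⟩
  · have h1 : (0:ℝ) < ((c i : ℤ) : ℝ) := hpos i
    have h2 : 0 < c i := by exact_mod_cast h1
    omega
  · rw [hMc i]; omega

/-- For any intersection matrix `M` and any integer vector `a` there exist two integer
vectors `d, d'` with all coordinates at least `1`, satisfying `(M d)ᵢ + aᵢ ≤ 0` and
`(M d')ᵢ + aᵢ ≤ 0` for all `i`, and the determinant condition
`dᵢ d'ⱼ - dⱼ d'ᵢ ≠ 0` for all adjacent pairs `i ≠ j` (those with `M i j > 0`). -/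
theorem exists_two_divisors_with_determinant_condition
    (n : ℕ) (hn : 1 ≤ n) (M : Matrix (Fin n) (Fin n) ℤ)
    (hsym : ∀ i j, M i j = M j i)
    (hneg : ∀ x : Fin n → ℝ, x ≠ 0 →
      x ⬝ᵥ (M.map (Int.cast : ℤ → ℝ)).mulVec x < 0)
    (hoff : ∀ i j, i ≠ j → 0 ≤ M i j)
    (hconn : ∀ i j : Fin n, i ≠ j → ∃ m : ℕ, ∃ k : ℕ → Fin n,
      k 0 = i ∧ k m = j ∧ ∀ t < m, 0 < M (k t) (k (t + 1)))
    (a : Fin n → ℤ) :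
    ∃ d d' : Fin n → ℤ,
      (∀ i, 1 ≤ d i) ∧ (∀ i, 1 ≤ d' i) ∧
      (∀ i, M.mulVec d i + a i ≤ 0) ∧ (∀ i, M.mulVec d' i + a i ≤ 0) ∧
      (∀ i j, i ≠ j → 0 < M i j → d i * d' j - d j * d' i ≠ 0) := by
  obtain ⟨c, hc1, hc2⟩ := exists_base_vec n M hneg hoff
  set A0 : ℤ := ∑ i, |a i| with hA0def
  have hA0 : ∀ i, |a i| ≤ A0 :=
    fun i => Finset.single_le_sum (fun j _ => abs_nonneg (a j)) (Finset.mem_univ i)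
  have hA0nn : 0 ≤ A0 := Finset.sum_nonneg fun j _ => abs_nonneg (a j)
  set K : ℤ := A0 + 1 with hKdef
  have hK1 : 1 ≤ K := by omega
  set B : ℤ := 1 + ∑ i, c i with hBdef
  have hcB : ∀ j, c j < B := by
    intro j
    have : c j ≤ ∑ i, c i :=
      Finset.single_le_sum (fun i _ => by linarith [hc1 i]) (Finset.mem_univ j)
    omega
  have hB1 : 1 ≤ B := by
    have : (0:ℤ) ≤ ∑ i, c i := Finset.sum_nonneg fun i _ => by linarith [hc1 i]
    omega
  set w : Fin n → ℤ := fun i => B ^ ((i : ℕ) + 1) with hwdef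
  have hw1 : ∀ i, 1 ≤ w i := fun i => one_le_pow₀ hB1
  set W : ℤ := ∑ i, |M.mulVec w i| with hWdef
  have hWnn : 0 ≤ W := Finset.sum_nonneg fun j _ => abs_nonneg _
  have hW : ∀ i, M.mulVec w i ≤ W := by
    intro i
    rw [hWdef]
    exact le_trans (le_abs_self _)
      (Finset.single_le_sum (f := fun j => |M.mulVec w j|)
        (fun j _ => abs_nonneg _) (Finset.mem_univ i))
  set L : ℤ := W + A0 + 1 with hLdef
  have hL1 : 1 ≤ L := by omega
  refine ⟨fun i => K * c i, fun i => L * c i + w i, ?_, ?_, ?_, ?_, ?_⟩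
  · intro i
    show 1 ≤ K * c i
    nlinarith [hc1 i]
  · intro i
    show 1 ≤ L * c i + w i
    nlinarith [hc1 i, hw1 i]
  · intro i
    have hmv : M.mulVec (fun k => K * c k) i = K * M.mulVec c i := by
      simp only [Matrix.mulVec, dotProduct, Finset.mul_sum]
      exact Finset.sum_congr rfl fun j _ => by ring
    rw [hmv]
    have h1 : K * M.mulVec c i ≤ K * (-1) :=
      mul_le_mul_of_nonneg_left (hc2 i) (by omega)
    have h2 : a i ≤ A0 := le_trans (le_abs_self _) (hA0 i)
    linarith
  · intro i
    have hmv : M.mulVec (fun k => L * c k + w k) i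
        = L * M.mulVec c i + M.mulVec w i := by
      simp only [Matrix.mulVec, dotProduct, Finset.mul_sum, ← Finset.sum_add_distrib]
      exact Finset.sum_congr rfl fun j _ => by ring
    rw [hmv]
    have h1 : L * M.mulVec c i ≤ L * (-1) :=
      mul_le_mul_of_nonneg_left (hc2 i) (by omega)
    have h2 : a i ≤ A0 := le_trans (le_abs_self _) (hA0 i)
    have h3 := hW i
    linarith
  · intro i j hij _
    have key : ∀ p q : Fin n, (p : ℕ) < (q : ℕ) → c q * w p < c p * w q := by
      intro p q hpq
      have hpow : (0:ℤ) < B ^ ((p:ℕ) + 1) := pow_pos (by omega) _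
      have s1 : c q * B ^ ((p:ℕ) + 1) < B * B ^ ((p:ℕ) + 1) :=
        mul_lt_mul_of_pos_right (hcB q) hpow
      have s2 : B * B ^ ((p:ℕ) + 1) = B ^ ((p:ℕ) + 2) := by ring
      have s3 : B ^ ((p:ℕ) + 2) ≤ B ^ ((q:ℕ) + 1) :=
        pow_le_pow_right₀ hB1 (by omega)
      have s4 : B ^ ((q:ℕ) + 1) ≤ c p * B ^ ((q:ℕ) + 1) :=
        le_mul_of_one_le_left (le_of_lt (pow_pos (by omega) _)) (hc1 p)
      simp only [hwdef]
      linarith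
    have hne : c i * w j - c j * w i ≠ 0 := by
      rcases Fin.lt_or_lt_of_ne hij with h | h
      · have := key i j (Fin.lt_def.mp h)
        omega
      · have := key j i (Fin.lt_def.mp h)
        omega
    have hexpand : K * c i * (L * c j + w j) - K * c j * (L * c i + w i)
        = K * (c i * w j - c j * w i) := by ring
    rw [hexpand]
    exact mul_ne_zero (by omega) hne
end

section
/- Blowup at a free point preserves negative definiteness: let $M$ be an $n \times n$ symmetric integer matrix that is negative definite, and fix an index $i_0$. Define the $(n+1) \times (n+1)$ symmetric integer matrix $M'$ by $M'_{jk} = M_{jk}$ for all $j,k \le n$ with $(j,k) \ne (i_0,i_0)$, $M'_{i_0 i_0} = M_{i_0 i_0} - 1$, $M'_{j, n+1} = M'_{n+1, j} = 1$ if $j = i_0$ and $0$ if $j \le n$, $j \ne i_0$, and $M'_{n+1,n+1} = -1$. Then $M'$ is negative definite. -/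
open Matrix

/-- Blowup at a free point preserves negative definiteness: extending a negative
definite symmetric integer matrix `M` by a new row/column corresponding to a `(-1)`-curve
meeting only the `i₀`-th component (whose self-intersection drops by `1`) yields a
negative definite matrix. -/
theorem blowup_free_point_neg_def
    (n : ℕ) (M : Matrix (Fin n) (Fin n) ℤ)
    (hsym : ∀ i j, M i j = M j i)
    (hneg : ∀ x : Fin n → ℝ, x ≠ 0 →
      x ⬝ᵥ (M.map (Int.cast : ℤ → ℝ)).mulVec x < 0)
    (i₀ : Fin n)
    (M' : Matrix (Fin (n + 1)) (Fin (n + 1)) ℤ)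
    (h₁ : ∀ j k : Fin n, ¬(j = i₀ ∧ k = i₀) → M' j.castSucc k.castSucc = M j k)
    (h₂ : M' i₀.castSucc i₀.castSucc = M i₀ i₀ - 1)
    (h₃ : M' i₀.castSucc (Fin.last n) = 1 ∧ M' (Fin.last n) i₀.castSucc = 1)
    (h₄ : ∀ j : Fin n, j ≠ i₀ →
      M' j.castSucc (Fin.last n) = 0 ∧ M' (Fin.last n) j.castSucc = 0)
    (h₅ : M' (Fin.last n) (Fin.last n) = -1) :
    ∀ x : Fin (n + 1) → ℝ, x ≠ 0 →
      x ⬝ᵥ (M'.map (Int.cast : ℤ → ℝ)).mulVec x < 0 := by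
  intro x hx
  set y : Fin n → ℝ := fun j => x j.castSucc with hy_def
  set t : ℝ := x (Fin.last n) with ht_def
  have hM' : ∀ j k : Fin n, (M' j.castSucc k.castSucc : ℝ) =
      (M j k : ℝ) + (if j = i₀ ∧ k = i₀ then (-1 : ℝ) else 0) := by
    intro j k
    by_cases h : j = i₀ ∧ k = i₀
    · obtain ⟨rfl, rfl⟩ := h
      rw [h₂]; push_cast; rw [if_pos ⟨rfl, rfl⟩]; ring
    · rw [h₁ j k h, if_neg h, add_zero]
  have hdp : y ⬝ᵥ (M.map (Int.cast : ℤ → ℝ)).mulVec y =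
      ∑ j : Fin n, ∑ k : Fin n, y j * ((M j k : ℝ) * y k) := by
    simp [dotProduct, mulVec, Matrix.map_apply, Finset.mul_sum]
  have key : x ⬝ᵥ (M'.map (Int.cast : ℤ → ℝ)).mulVec x =
      (∑ j : Fin n, ∑ k : Fin n, y j * ((M j k : ℝ) * y k)) - (y i₀ - t) ^ 2 := by
    simp only [dotProduct, mulVec, Matrix.map_apply, Finset.mul_sum]
    simp only [Fin.sum_univ_castSucc]
    have hB : ∀ j : Fin n, x j.castSucc * ((M' j.castSucc (Fin.last n) : ℝ) * t) =
        if j = i₀ then y i₀ * t else 0 := by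
      intro j
      by_cases h : j = i₀
      · subst h; rw [h₃.1]; simp [hy_def]
      · rw [(h₄ j h).1]; simp [h]
    have hC : ∀ k : Fin n, t * ((M' (Fin.last n) k.castSucc : ℝ) * x k.castSucc) =
        if k = i₀ then t * y i₀ else 0 := by
      intro k
      by_cases h : k = i₀
      · subst h; rw [h₃.2]; simp [hy_def, mul_comm]
      · rw [(h₄ k h).2]; simp [h]
    have hA : ∀ j : Fin n, ∀ k : Fin n,
        x j.castSucc * ((M' j.castSucc k.castSucc : ℝ) * x k.castSucc) =
        y j * ((M j k : ℝ) * y k) + (if j = i₀ ∧ k = i₀ then -(y i₀ * y i₀) else 0) := by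
      intro j k
      rw [hM']
      by_cases h : j = i₀ ∧ k = i₀
      · obtain ⟨rfl, rfl⟩ := h; simp [hy_def]; ring
      · rw [if_neg h, if_neg h]; simp [hy_def]
    calc
      (∑ j : Fin n, (∑ k : Fin n,
            x j.castSucc * ((M' j.castSucc k.castSucc : ℝ) * x k.castSucc) +
            x j.castSucc * ((M' j.castSucc (Fin.last n) : ℝ) * t))) +
          ((∑ k : Fin n, t * ((M' (Fin.last n) k.castSucc : ℝ) * x k.castSucc)) +
            t * ((M' (Fin.last n) (Fin.last n) : ℝ) * t))
        = (∑ j : Fin n, ∑ k : Fin n,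
            (y j * ((M j k : ℝ) * y k) + (if j = i₀ ∧ k = i₀ then -(y i₀ * y i₀) else 0))) +
          (∑ j : Fin n, if j = i₀ then y i₀ * t else 0) +
          ((∑ k : Fin n, if k = i₀ then t * y i₀ else 0) + t * ((-1 : ℝ) * t)) := by
          rw [h₅]
          push_cast
          simp only [hA, hB, hC, Finset.sum_add_distrib]
      _ = (∑ j : Fin n, ∑ k : Fin n, y j * ((M j k : ℝ) * y k)) - (y i₀ - t) ^ 2 := by
          simp only [Finset.sum_add_distrib, Finset.sum_ite_eq', Finset.mem_univ, if_true]
          have : ∀ j : Fin n, (∑ k : Fin n,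
              if j = i₀ ∧ k = i₀ then -(y i₀ * y i₀) else 0) =
              if j = i₀ then -(y i₀ * y i₀) else 0 := by
            intro j
            by_cases h : j = i₀
            · subst h; simp
            · simp [h]
          rw [Finset.sum_congr rfl fun j _ => this j]
          simp only [Finset.sum_ite_eq', Finset.mem_univ, if_true]
          ring
  rw [key, ← hdp]
  by_cases hy : y = 0
  · have ht : t ≠ 0 := by
      intro ht0
      apply hx
      funext i
      refine Fin.lastCases ?_ ?_ i
      · exact ht0
      · intro j; exact congrFun hy j
    have : y i₀ = 0 := congrFun hy i₀
    rw [this]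
    simp [hy, dotProduct]
    positivity
  · have h := hneg y hy
    nlinarith [sq_nonneg (y i₀ - t)]
end

section
/- Blowup at a double point preserves negative definiteness: let $M$ be an $n \times n$ symmetric integer matrix that is negative definite, and fix indices $i_0 \ne j_0$. Define the $(n+1) \times (n+1)$ symmetric integer matrix $M''$ by $M''_{jk} = M_{jk}$ for all $j,k \le n$ except $M''_{i_0 i_0} = M_{i_0 i_0} - 1$, $M''_{j_0 j_0} = M_{j_0 j_0} - 1$, and $M''_{i_0 j_0} = M''_{j_0 i_0} = M_{i_0 j_0} - 1$; and set $M''_{j, n+1} = M''_{n+1, j} = 1$ if $j \in \{i_0, j_0\}$ and $0$ if $j \le n$, $j \notin \{i_0,j_0\}$, and $M''_{n+1,n+1} = -1$. Then $M''$ is negative definite. -/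
open Matrix

/-- Blowup at a double point preserves negative definiteness: extending a negative
definite symmetric integer matrix `M` by a new row/column corresponding to a `(-1)`-curve
meeting exactly the `i₀`-th and `j₀`-th components (whose self-intersections drop by `1`
and whose mutual intersection number drops by `1`) yields a negative definite matrix. -/
theorem blowup_double_point_neg_def
    (n : ℕ) (M : Matrix (Fin n) (Fin n) ℤ)
    (hsym : ∀ i j, M i j = M j i)
    (hneg : ∀ x : Fin n → ℝ, x ≠ 0 →
      x ⬝ᵥ (M.map (Int.cast : ℤ → ℝ)).mulVec x < 0)
    (i₀ j₀ : Fin n) (hij : i₀ ≠ j₀)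
    (M'' : Matrix (Fin (n + 1)) (Fin (n + 1)) ℤ)
    (h₁ : ∀ j k : Fin n,
      ¬((j = i₀ ∧ k = i₀) ∨ (j = j₀ ∧ k = j₀) ∨ (j = i₀ ∧ k = j₀) ∨ (j = j₀ ∧ k = i₀)) →
      M'' j.castSucc k.castSucc = M j k)
    (h₂ : M'' i₀.castSucc i₀.castSucc = M i₀ i₀ - 1)
    (h₃ : M'' j₀.castSucc j₀.castSucc = M j₀ j₀ - 1)
    (h₄ : M'' i₀.castSucc j₀.castSucc = M i₀ j₀ - 1 ∧
      M'' j₀.castSucc i₀.castSucc = M j₀ i₀ - 1)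
    (h₅ : M'' i₀.castSucc (Fin.last n) = 1 ∧ M'' (Fin.last n) i₀.castSucc = 1 ∧
      M'' j₀.castSucc (Fin.last n) = 1 ∧ M'' (Fin.last n) j₀.castSucc = 1)
    (h₆ : ∀ j : Fin n, j ≠ i₀ → j ≠ j₀ →
      M'' j.castSucc (Fin.last n) = 0 ∧ M'' (Fin.last n) j.castSucc = 0)
    (h₇ : M'' (Fin.last n) (Fin.last n) = -1) :
    ∀ x : Fin (n + 1) → ℝ, x ≠ 0 →
      x ⬝ᵥ (M''.map (Int.cast : ℤ → ℝ)).mulVec x < 0 := by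
  intro x hx
  set y : Fin n → ℝ := fun i => x i.castSucc with hy
  set t : ℝ := x (Fin.last n) with ht
  set e : Fin n → ℝ := fun j => (if j = i₀ then (1:ℝ) else 0) + (if j = j₀ then 1 else 0)
    with he
  set s : ℝ := y i₀ + y j₀ with hs
  -- entry formulas
  have hMe : ∀ j k : Fin n, ((M'' j.castSucc k.castSucc : ℤ) : ℝ)
      = (M j k : ℝ) - e j * e k := by
    intro j k
    by_cases hj1 : j = i₀
    · by_cases hk1 : k = i₀
      · rw [hj1, hk1, h₂]; simp [he, hij]
      · by_cases hk2 : k = j₀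
        · rw [hj1, hk2, h₄.1]; simp [he, hij, hij.symm]
        · rw [hj1, h₁ i₀ k (by simp [hk1, hk2, hij])]; simp [he, hij, hk1, hk2]
    · by_cases hj2 : j = j₀
      · by_cases hk1 : k = i₀
        · rw [hj2, hk1, h₄.2]; simp [he, hij, hij.symm]
        · by_cases hk2 : k = j₀
          · rw [hj2, hk2, h₃]; simp [he, hij.symm]
          · rw [hj2, h₁ j₀ k (by simp [hk1, hk2, hij.symm])]
            simp [he, hij.symm, hk1, hk2]
      · rw [h₁ j k (by simp [hj1, hj2])]; simp [he, hj1, hj2]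
  have hcol : ∀ j : Fin n, ((M'' j.castSucc (Fin.last n) : ℤ) : ℝ) = e j := by
    intro j
    by_cases hj1 : j = i₀
    · rw [hj1, h₅.1]; simp [he, hij]
    · by_cases hj2 : j = j₀
      · rw [hj2, h₅.2.2.1]; simp [he, hij.symm]
      · rw [(h₆ j hj1 hj2).1]; simp [he, hj1, hj2]
  have hrow : ∀ k : Fin n, ((M'' (Fin.last n) k.castSucc : ℤ) : ℝ) = e k := by
    intro k
    by_cases hk1 : k = i₀
    · rw [hk1, h₅.2.1]; simp [he, hij]
    · by_cases hk2 : k = j₀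
      · rw [hk2, h₅.2.2.2]; simp [he, hij.symm]
      · rw [(h₆ k hk1 hk2).2]; simp [he, hk1, hk2]
  have hsum : ∀ z : Fin n → ℝ, ∑ k : Fin n, e k * z k = z i₀ + z j₀ := by
    intro z
    simp only [he, add_mul, ite_mul, one_mul, zero_mul, Finset.sum_add_distrib,
      Finset.sum_ite_eq', Finset.mem_univ, if_true]
  have key : x ⬝ᵥ (M''.map (Int.cast : ℤ → ℝ)).mulVec x
      = y ⬝ᵥ (M.map (Int.cast : ℤ → ℝ)).mulVec y - (s - t) ^ 2 := by
    simp only [dotProduct, mulVec, Matrix.map_apply]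
    rw [Fin.sum_univ_castSucc]
    have hinner : ∀ j : Fin n, ∑ k : Fin (n + 1), ((M'' j.castSucc k : ℤ) : ℝ) * x k
        = (∑ k : Fin n, ((M j k : ℤ) : ℝ) * y k) + e j * (t - s) := by
      intro j
      rw [Fin.sum_univ_castSucc]
      have : ∀ k : Fin n, ((M'' j.castSucc k.castSucc : ℤ) : ℝ) * x k.castSucc
          = ((M j k : ℤ) : ℝ) * y k - e j * (e k * y k) := by
        intro k; rw [hMe]; ring
      rw [Finset.sum_congr rfl fun k _ => this k, Finset.sum_sub_distrib,
        ← Finset.mul_sum, hsum, hcol]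
      ring
    have hlastrow : ∑ k : Fin (n + 1), ((M'' (Fin.last n) k : ℤ) : ℝ) * x k = s - t := by
      rw [Fin.sum_univ_castSucc]
      have : ∀ k : Fin n, ((M'' (Fin.last n) k.castSucc : ℤ) : ℝ) * x k.castSucc
          = e k * y k := by intro k; rw [hrow]
      rw [Finset.sum_congr rfl fun k _ => this k, hsum, h₇]
      push_cast; ring
    rw [hlastrow, Finset.sum_congr rfl fun j _ => by rw [hinner j]]
    have expand : ∀ j : Fin n, x j.castSucc *
        ((∑ k : Fin n, ((M j k : ℤ) : ℝ) * y k) + e j * (t - s))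
        = y j * (∑ k : Fin n, ((M j k : ℤ) : ℝ) * y k) + (t - s) * (e j * y j) := by
      intro j; ring
    rw [Finset.sum_congr rfl fun j _ => expand j, Finset.sum_add_distrib,
      ← Finset.mul_sum]
    have : ∑ j : Fin n, e j * y j = s := hsum y
    rw [this]
    ring
  rw [key]
  by_cases hy0 : y = 0
  · have hts : s = 0 := by simp [hs, hy0]
    have ht0 : t ≠ 0 := by
      intro ht0
      apply hx
      funext i
      refine Fin.lastCases ?_ ?_ i
      · exact ht0
      · intro j; exact congrFun hy0 j
    have : y ⬝ᵥ (M.map (Int.cast : ℤ → ℝ)).mulVec y = 0 := by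
      simp [hy0]
    rw [this, hts]
    have : (0 : ℝ) < t ^ 2 := by positivity
    nlinarith
  · have h1 := hneg y hy0
    have h2 : (0:ℝ) ≤ (s - t) ^ 2 := sq_nonneg _
    linarith
end
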